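/- arXiv:1009.3461 — 7 statements merged into one kernel-verified Lean document; each statement's English description precedes it below -/
import Mathlib

section
/- Let X be a complex Banach space with the property that every bounded linear operator on X has the form w·I + S for some w ∈ ℂ with S strictly singular, and let Y = X ⊕ X. Then for every bounded linear operator T on Y there exist a continuous linear automorphism J of Y, scalars λ₁, λ₂ ∈ ℂ, and strictly singular operators S₁, S₂, S₃, S₄ on X such that either J⁻¹TJ(x,y) = (λ₁x + y + S₁x + S₂y, λ₂y + S₃x + S₄y) for all (x,y) ∈ Y, or J⁻¹TJ(x,y) = (λ₁x + S₁x + S₂y, λ₂y + S₃x + S₄y) for all (x,y) ∈ Y. -/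
open Filter Topology

/-- The J-set of `x` under the operator `T`. -/
def JSet {𝕜 X : Type*} [NontriviallyNormedField 𝕜] [NormedAddCommGroup X] [NormedSpace 𝕜 X]
    (T : X →L[𝕜] X) (x : X) : Set X :=
  {y | ∃ k : ℕ → ℕ, StrictMono k ∧ ∃ u : ℕ → X,
    Tendsto u atTop (𝓝 x) ∧ Tendsto (fun n => (T ^ k n) (u n)) atTop (𝓝 y)}

/-- A bounded operator is strictly singular if it is bounded below by no positive constant
on any infinite-dimensional subspace. -/
def StrictlySingular {𝕜 X : Type*} [NontriviallyNormedField 𝕜] [NormedAddCommGroup X]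
    [NormedSpace 𝕜 X] (S : X →L[𝕜] X) : Prop :=
  ∀ M : Submodule 𝕜 X, ¬ FiniteDimensional 𝕜 M →
    ¬ ∃ c : ℝ, 0 < c ∧ ∀ x ∈ M, c * ‖x‖ ≤ ‖S x‖

/-!
Each of the four blocks of `T` is a scalar plus a strictly singular operator, so `T` is a scalar
`2 × 2` matrix `A` acting on `X × X` plus a matrix of strictly singular operators. Conjugating by
the automorphism induced by an invertible scalar matrix `P` with `P⁻¹ A P` in Jordan form gives the
claim, because the strictly singular operators form a linear subspace: the perturbation stays a
matrix of strictly singular operators.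

Closure under addition is the real point. A strictly singular `S` is small on an
infinite-dimensional subspace of any given infinite-dimensional `M`: pick unit vectors
`xₙ ∈ M` with `‖S xₙ‖ ≤ ε 4⁻ⁿ`, each in the kernels of norming functionals `gₘ` of the earlier
`xₘ`. This triangularity bounds the coefficients of `∑ cₖ xₖ` by `|cₙ| ≤ 2ⁿ ‖∑ cₖ xₖ‖`, so `S` has
norm at most `ε` on the span of the `xₙ`. If `S + T` were bounded below by `c` on `M`, then `T`
would be bounded below by `c / 2` on such a subspace where `‖S‖ ≤ c / 2`.
-/

theorem Matrix.exists_jordan_form_fin_two {K : Type*} [Field K] [IsAlgClosed K]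
    (A : Matrix (Fin 2) (Fin 2) K) :
    ∃ P : Matrix (Fin 2) (Fin 2) K, IsUnit P.det ∧
      ∃ l₁ l₂ δ : K, (δ = 0 ∨ δ = 1) ∧ A * P = P * !![l₁, δ; 0, l₂] := by
  obtain ⟨l₁, hl₁⟩ := IsAlgClosed.exists_root A.charpoly
    (by rw [Matrix.charpoly_degree_eq_dim, Fintype.card_fin]; norm_num)
  simp only [Matrix.charpoly_fin_two, Polynomial.IsRoot.def, Polynomial.eval_add,
    Polynomial.eval_sub, Polynomial.eval_pow, Polynomial.eval_mul, Polynomial.eval_C,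
    Polynomial.eval_X, Matrix.trace_fin_two, Matrix.det_fin_two] at hl₁
  rw [A.eta_fin_two]
  by_cases hb : A 0 1 = 0
  · by_cases hc : A 1 0 = 0
    · refine ⟨1, by simp, A 0 0, A 1 1, 0, .inl rfl, ?_⟩
      simp [hb, hc]
    · refine ⟨!![l₁ - A 1 1, 1; A 1 0, 0], by simpa [Matrix.det_fin_two] using hc,
        l₁, A 0 0 + A 1 1 - l₁, 1, .inr rfl, ?_⟩
      rw [hb] at hl₁
      ext i j
      fin_cases i <;> fin_cases j <;> simp [Matrix.mul_apply, hb] <;>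
        first | ring1 | linear_combination -hl₁
  -- the first column of `P` is an eigenvector for `l₁`
  · refine ⟨!![A 0 1, 0; l₁ - A 0 0, 1], by simpa [Matrix.det_fin_two] using hb,
      l₁, A 0 0 + A 1 1 - l₁, 1, .inr rfl, ?_⟩
    ext i j
    fin_cases i <;> fin_cases j <;> simp [Matrix.mul_apply] <;>
      first | ring1 | linear_combination -hl₁

namespace Matrix

variable {𝕜 X : Type*} [NontriviallyNormedField 𝕜] [NormedAddCommGroup X] [NormedSpace 𝕜 X]

def toProdCLM (A : Matrix (Fin 2) (Fin 2) 𝕜) : X × X →L[𝕜] X × X :=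
  open ContinuousLinearMap in
  (A 0 0 • fst 𝕜 X X + A 0 1 • snd 𝕜 X X).prod (A 1 0 • fst 𝕜 X X + A 1 1 • snd 𝕜 X X)

@[simp]
theorem toProdCLM_apply (A : Matrix (Fin 2) (Fin 2) 𝕜) (p : X × X) :
    A.toProdCLM p = (A 0 0 • p.1 + A 0 1 • p.2, A 1 0 • p.1 + A 1 1 • p.2) :=
  rfl

theorem toProdCLM_one : (1 : Matrix (Fin 2) (Fin 2) 𝕜).toProdCLM = .id 𝕜 (X × X) := by
  ext p <;> simp

theorem toProdCLM_mul (A B : Matrix (Fin 2) (Fin 2) 𝕜) :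
    (A * B).toProdCLM = (A.toProdCLM : X × X →L[𝕜] X × X).comp B.toProdCLM := by
  ext p <;> simp [mul_apply, Fin.sum_univ_two] <;> module

noncomputable def toProdCLMEquiv (P : Matrix (Fin 2) (Fin 2) 𝕜) (hP : IsUnit P.det) :
    (X × X) ≃L[𝕜] (X × X) :=
  .equivOfInverse' P.toProdCLM P⁻¹.toProdCLM
    (by rw [← toProdCLM_mul, mul_nonsing_inv P hP, toProdCLM_one])
    (by rw [← toProdCLM_mul, nonsing_inv_mul P hP, toProdCLM_one])

end Matrix

theorem Submodule.not_finiteDimensional_inf_ker {K V W : Type*} [DivisionRing K] [AddCommGroup V]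
    [Module K V] [AddCommGroup W] [Module K W] [FiniteDimensional K W] {M : Submodule K V}
    (hM : ¬FiniteDimensional K M) (f : V →ₗ[K] W) :
    ¬FiniteDimensional K ↥(M ⊓ LinearMap.ker f) := by
  simp only [← Submodule.fg_iff_finiteDimensional] at hM ⊢
  exact fun h => hM (Submodule.fg_of_fg_map_of_fg_inf_ker f (IsNoetherian.noetherian _) h)

theorem norm_coeff_le_of_triangular {𝕜 X : Type*} [NontriviallyNormedField 𝕜]
    [NormedAddCommGroup X] [NormedSpace 𝕜 X] {x : ℕ → X} {g : ℕ → StrongDual 𝕜 X}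
    (hx : ∀ n, ‖x n‖ ≤ 1) (hg : ∀ n, ‖g n‖ ≤ 1) (hgx : ∀ n, g n (x n) = 1)
    (hgx_lt : ∀ m n, m < n → g m (x n) = 0) (s : Finset ℕ) (c : ℕ → 𝕜) {n : ℕ} (hn : n ∈ s) :
    ‖c n‖ ≤ 2 ^ n * ‖∑ k ∈ s, c k • x k‖ := by
  set y := ∑ k ∈ s, c k • x k
  induction n using Nat.strong_induction_on with
  | _ n ih =>
  have hgy : g n y = ∑ k ∈ s with k < n, c k * g n (x k) + c n := by
    rw [map_sum, ← Finset.sum_filter_add_sum_filter_not s (· < n)]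
    congr 1
    · simp
    · rw [Finset.sum_eq_single_of_mem n (by simpa using hn) fun k hk hkn => ?_]
      · simp [hgx]
      · simp [hgx_lt n k (by simp at hk; omega)]
  have hlt : ∀ k ∈ s.filter (· < n), ‖c k * g n (x k)‖ ≤ 2 ^ k * ‖y‖ := fun k hk => by
    rw [Finset.mem_filter] at hk
    calc ‖c k * g n (x k)‖ ≤ ‖c k‖ * (‖g n‖ * ‖x k‖) := by
          rw [norm_mul]; gcongr; exact (g n).le_opNorm _
      _ ≤ ‖c k‖ :=
          mul_le_of_le_one_right (norm_nonneg _) (mul_le_one₀ (hg n) (norm_nonneg _) (hx k))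
      _ ≤ 2 ^ k * ‖y‖ := ih k hk.2 hk.1
  calc ‖c n‖ = ‖g n y - ∑ k ∈ s with k < n, c k * g n (x k)‖ := by rw [hgy, add_sub_cancel_left]
    _ ≤ ‖y‖ + ∑ k ∈ Finset.range n, 2 ^ k * ‖y‖ := by
        refine (norm_sub_le _ _).trans (add_le_add ?_ ?_)
        · simpa using (g n).le_opNorm y |>.trans (mul_le_of_le_one_left (norm_nonneg _) (hg n))
        · refine (norm_sum_le _ _).trans ((Finset.sum_le_sum hlt).trans ?_)
          exact Finset.sum_le_sum_of_subset_of_nonneg (fun k hk => by simp at hk ⊢; omega)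
            fun _ _ _ => by positivity
    _ = 2 ^ n * ‖y‖ := by
        rw [← Finset.sum_mul, geom_sum_eq (by norm_num : (2 : ℝ) ≠ 1)]; ring

section NontriviallyNormedField

variable {𝕜 X : Type*} [NontriviallyNormedField 𝕜] [NormedAddCommGroup X] [NormedSpace 𝕜 X]

theorem strictlySingular_zero : StrictlySingular (0 : X →L[𝕜] X) := by
  rintro M hM ⟨c, hc, hle⟩
  obtain ⟨x, hxM, hx⟩ := Submodule.exists_mem_ne_zero_of_ne_bot
    (fun h : M = ⊥ => hM (h ▸ inferInstance))
  have := hle x hxM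
  simp only [zero_apply, norm_zero] at this
  exact (mul_pos hc (norm_pos_iff.mpr hx)).not_ge this

theorem StrictlySingular.smul {S : X →L[𝕜] X} (hS : StrictlySingular S) (a : 𝕜) :
    StrictlySingular (a • S) := by
  rcases eq_or_ne a 0 with rfl | ha
  · rw [zero_smul]; exact strictlySingular_zero
  rintro M hM ⟨c, hc, hle⟩
  refine hS M hM ⟨c / ‖a‖, by positivity, fun x hx => ?_⟩
  rw [div_mul_eq_mul_div, div_le_iff₀ (norm_pos_iff.mpr ha), mul_comm _ ‖a‖, ← norm_smul]
  exact hle x hx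

def HasStrictlySingularBlocks (K : X × X →L[𝕜] X × X) : Prop :=
  ∃ S₁ S₂ S₃ S₄ : X →L[𝕜] X, StrictlySingular S₁ ∧ StrictlySingular S₂ ∧
    StrictlySingular S₃ ∧ StrictlySingular S₄ ∧
    ∀ p : X × X, K p = (S₁ p.1 + S₂ p.2, S₃ p.1 + S₄ p.2)

open ContinuousLinearMap in
theorem exists_hasStrictlySingularBlocks_sub_toProdCLM
    (hform : ∀ A : X →L[𝕜] X, ∃ (w : 𝕜) (S : X →L[𝕜] X),
      StrictlySingular S ∧ A = w • ContinuousLinearMap.id 𝕜 X + S)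
    (T : X × X →L[𝕜] X × X) :
    ∃ A : Matrix (Fin 2) (Fin 2) 𝕜, HasStrictlySingularBlocks (T - A.toProdCLM) := by
  obtain ⟨a, S₁, h₁, e₁⟩ := hform (fst 𝕜 X X ∘L T ∘L inl 𝕜 X X)
  obtain ⟨b, S₂, h₂, e₂⟩ := hform (fst 𝕜 X X ∘L T ∘L inr 𝕜 X X)
  obtain ⟨c, S₃, h₃, e₃⟩ := hform (snd 𝕜 X X ∘L T ∘L inl 𝕜 X X)
  obtain ⟨d, S₄, h₄, e₄⟩ := hform (snd 𝕜 X X ∘L T ∘L inr 𝕜 X X)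
  refine ⟨!![a, b; c, d], S₁, S₂, S₃, S₄, h₁, h₂, h₃, h₄, fun p => ?_⟩
  have hp : T p = T (p.1, 0) + T (0, p.2) := by rw [← map_add, Prod.mk_add_mk, add_zero, zero_add]
  have e₁ := congr($e₁ p.1)
  have e₂ := congr($e₂ p.2)
  have e₃ := congr($e₃ p.1)
  have e₄ := congr($e₄ p.2)
  simp only [comp_apply, inl_apply, coe_fst', add_apply, smul_apply, id_apply, inr_apply,
    coe_snd'] at e₁ e₂ e₃ e₄
  ext <;> simp [hp, e₁, e₂, e₃, e₄] <;> abel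

end NontriviallyNormedField

section RCLike

variable {𝕜 X : Type*} [RCLike 𝕜] [NormedAddCommGroup X] [NormedSpace 𝕜 X]

theorem StrictlySingular.exists_norm_eq_one_norm_lt {S : X →L[𝕜] X} (hS : StrictlySingular S)
    {M : Submodule 𝕜 X} (hM : ¬FiniteDimensional 𝕜 M) {δ : ℝ} (hδ : 0 < δ) :
    ∃ x ∈ M, ‖x‖ = 1 ∧ ‖S x‖ < δ := by
  obtain ⟨x, hxM, hx⟩ :=
    (by simpa using hS M hM : ∀ c : ℝ, 0 < c → ∃ x ∈ M, ‖S x‖ < c * ‖x‖) δ hδ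
  have hx0 : x ≠ 0 := by rintro rfl; simp at hx
  refine ⟨(‖x‖⁻¹ : 𝕜) • x, M.smul_mem _ hxM, norm_smul_inv_norm hx0, ?_⟩
  rwa [map_smul, norm_smul, norm_inv, RCLike.norm_ofReal, abs_norm,
    inv_mul_lt_iff₀ (norm_pos_iff.mpr hx0), mul_comm]

theorem StrictlySingular.exists_triangular_seq {S : X →L[𝕜] X} (hS : StrictlySingular S)
    {M : Submodule 𝕜 X} (hM : ¬FiniteDimensional 𝕜 M) {δ : ℕ → ℝ} (hδ : ∀ n, 0 < δ n)
    (hδ_anti : Antitone δ) :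
    ∃ (x : ℕ → X) (g : ℕ → StrongDual 𝕜 X),
      (∀ n, x n ∈ M ∧ ‖x n‖ = 1 ∧ ‖S (x n)‖ ≤ δ n ∧ ‖g n‖ = 1 ∧ g n (x n) = 1) ∧
      ∀ m n, m < n → g m (x n) = 0 := by
  classical
  -- The first component is a counter: it forces the `n`-th term to be chosen with `δ n`.
  obtain ⟨f, hfP, hfr⟩ := exists_seq_of_forall_finset_exists
    (fun t : ℕ × X × StrongDual 𝕜 X =>
      t.2.1 ∈ M ∧ ‖t.2.1‖ = 1 ∧ ‖S t.2.1‖ ≤ δ t.1 ∧ ‖t.2.2‖ = 1 ∧ t.2.2 t.2.1 = 1)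
    (fun t t' => t.1 < t'.1 ∧ t.2.2 t'.2.1 = 0) fun s _ => by
      let L : X →ₗ[𝕜] (s → 𝕜) := LinearMap.pi fun t => (t.1.2.2 : X →ₗ[𝕜] 𝕜)
      obtain ⟨x, hx, hx1, hSx⟩ := hS.exists_norm_eq_one_norm_lt
        (Submodule.not_finiteDimensional_inf_ker hM L) (hδ (s.sup Prod.fst + 1))
      obtain ⟨g, hg1, hgx⟩ := exists_dual_vector 𝕜 x (by simp [hx1])
      refine ⟨(s.sup Prod.fst + 1, x, g), ⟨hx.1, hx1, hSx.le, hg1, by simp [hgx, hx1]⟩,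
        fun t ht => ⟨Nat.lt_succ_of_le (Finset.le_sup ht), ?_⟩⟩
      exact congr_fun (LinearMap.mem_ker.mp hx.2) ⟨t, ht⟩
  refine ⟨fun n => (f n).2.1, fun n => (f n).2.2, fun n => ?_, fun m n h => (hfr m n h).2⟩
  obtain ⟨hxM, hx1, hSx, hg1, hgx⟩ := hfP n
  have hn : n ≤ (f n).1 := (StrictMono.id_le fun m n h => (hfr m n h).1) n
  exact ⟨hxM, hx1, hSx.trans (hδ_anti hn), hg1, hgx⟩

theorem StrictlySingular.exists_le_not_finiteDimensional_norm_le {S : X →L[𝕜] X}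
    (hS : StrictlySingular S) {M : Submodule 𝕜 X} (hM : ¬FiniteDimensional 𝕜 M) {ε : ℝ}
    (hε : 0 < ε) :
    ∃ N ≤ M, ¬FiniteDimensional 𝕜 N ∧ ∀ y ∈ N, ‖S y‖ ≤ ε * ‖y‖ := by
  obtain ⟨x, g, hxg, hgx_lt⟩ := hS.exists_triangular_seq hM
    (δ := fun n => ε / 2 * (1 / 4) ^ n) (fun n => by positivity)
    fun m n h => mul_le_mul_of_nonneg_left
      (pow_le_pow_of_le_one (by norm_num) (by norm_num) h) (by positivity)
  have hcoeff := norm_coeff_le_of_triangular (fun n => (hxg n).2.1.le)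
    (fun n => (hxg n).2.2.2.1.le) (fun n => (hxg n).2.2.2.2) hgx_lt
  refine ⟨Submodule.span 𝕜 (Set.range x),
    Submodule.span_le.mpr (Set.range_subset_iff.mpr fun n => (hxg n).1), fun hfin => ?_,
    fun y hy => ?_⟩
  · have hli : LinearIndependent 𝕜 x := linearIndependent_iff'.mpr fun s c hs n hn => by
      simpa [hs] using hcoeff s c hn
    have := (linearIndependent_span hli).finite
    exact not_finite ℕ
  · obtain ⟨c, rfl⟩ := Finsupp.mem_span_range_iff_exists_finsupp.mp hy
    set y := c.sum fun k a => a • x k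
    calc ‖S y‖ ≤ ∑ k ∈ c.support, ‖c k‖ * ‖S (x k)‖ := by
          simp only [y, Finsupp.sum, map_sum, map_smul, ← norm_smul]
          exact norm_sum_le _ _
      _ ≤ ∑ k ∈ c.support, ε / 2 * ‖y‖ * (1 / 2) ^ k := by
          refine Finset.sum_le_sum fun k hk => ?_
          calc ‖c k‖ * ‖S (x k)‖ ≤ 2 ^ k * ‖y‖ * (ε / 2 * (1 / 4) ^ k) :=
                mul_le_mul (hcoeff _ _ hk) (hxg k).2.2.1 (norm_nonneg _) (by positivity)
            _ = ε / 2 * ‖y‖ * (1 / 2) ^ k := by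
                have h2 : (2 : ℝ) ^ k * (1 / 2) ^ k = 1 := by rw [← mul_pow]; norm_num
                rw [show (1 / 4 : ℝ) ^ k = (1 / 2) ^ k * (1 / 2) ^ k by rw [← mul_pow]; norm_num]
                linear_combination (ε / 2 * ‖y‖ * (1 / 2) ^ k) * h2
      _ ≤ ε / 2 * ‖y‖ * ∑' k : ℕ, (1 / 2 : ℝ) ^ k := by
          rw [← Finset.mul_sum]
          gcongr
          exact summable_geometric_two.sum_le_tsum _ fun _ _ => by positivity
      _ = ε * ‖y‖ := by rw [tsum_geometric_two]; ring

theorem StrictlySingular.add {S T : X →L[𝕜] X} (hS : StrictlySingular S)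
    (hT : StrictlySingular T) : StrictlySingular (S + T) := by
  rintro M hM ⟨c, hc, hle⟩
  obtain ⟨N, hNM, hN, hSN⟩ := hS.exists_le_not_finiteDimensional_norm_le hM (half_pos hc)
  refine hT N hN ⟨c / 2, half_pos hc, fun y hy => ?_⟩
  have hST := hle y (hNM hy)
  rw [add_apply] at hST
  linarith [hSN y hy, norm_add_le (S y) (T y)]

theorem HasStrictlySingularBlocks.toProdCLM_comp {K : X × X →L[𝕜] X × X}
    (hK : HasStrictlySingularBlocks K) (Q : Matrix (Fin 2) (Fin 2) 𝕜) :
    HasStrictlySingularBlocks (Q.toProdCLM.comp K) := by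
  obtain ⟨S₁, S₂, S₃, S₄, h₁, h₂, h₃, h₄, hK⟩ := hK
  refine ⟨Q 0 0 • S₁ + Q 0 1 • S₃, Q 0 0 • S₂ + Q 0 1 • S₄, Q 1 0 • S₁ + Q 1 1 • S₃,
    Q 1 0 • S₂ + Q 1 1 • S₄, (h₁.smul _).add (h₃.smul _), (h₂.smul _).add (h₄.smul _),
    (h₁.smul _).add (h₃.smul _), (h₂.smul _).add (h₄.smul _), fun p => ?_⟩
  ext <;> simp [hK] <;> module

theorem HasStrictlySingularBlocks.comp_toProdCLM {K : X × X →L[𝕜] X × X}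
    (hK : HasStrictlySingularBlocks K) (P : Matrix (Fin 2) (Fin 2) 𝕜) :
    HasStrictlySingularBlocks (K.comp P.toProdCLM) := by
  obtain ⟨S₁, S₂, S₃, S₄, h₁, h₂, h₃, h₄, hK⟩ := hK
  refine ⟨P 0 0 • S₁ + P 1 0 • S₂, P 0 1 • S₁ + P 1 1 • S₂, P 0 0 • S₃ + P 1 0 • S₄,
    P 0 1 • S₃ + P 1 1 • S₄, (h₁.smul _).add (h₂.smul _), (h₁.smul _).add (h₂.smul _),
    (h₃.smul _).add (h₄.smul _), (h₃.smul _).add (h₄.smul _), fun p => ?_⟩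
  ext <;> simp [hK] <;> module

end RCLike

theorem stmt_5_general {X : Type*} [NormedAddCommGroup X] [NormedSpace ℂ X]
    (hform : ∀ A : X →L[ℂ] X, ∃ (w : ℂ) (S : X →L[ℂ] X),
      StrictlySingular S ∧ A = w • ContinuousLinearMap.id ℂ X + S)
    (T : (X × X) →L[ℂ] (X × X)) :
    ∃ (J : (X × X) ≃L[ℂ] (X × X)) (lam₁ lam₂ : ℂ) (S₁ S₂ S₃ S₄ : X →L[ℂ] X),
      StrictlySingular S₁ ∧ StrictlySingular S₂ ∧ StrictlySingular S₃ ∧ StrictlySingular S₄ ∧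
      ((∀ p : X × X, J.symm (T (J p)) =
          (lam₁ • p.1 + p.2 + S₁ p.1 + S₂ p.2, lam₂ • p.2 + S₃ p.1 + S₄ p.2)) ∨
       (∀ p : X × X, J.symm (T (J p)) =
          (lam₁ • p.1 + S₁ p.1 + S₂ p.2, lam₂ • p.2 + S₃ p.1 + S₄ p.2))) := by
  obtain ⟨A, hK⟩ := exists_hasStrictlySingularBlocks_sub_toProdCLM hform T
  obtain ⟨P, hP, l₁, l₂, δ, hδ, hAP⟩ := A.exists_jordan_form_fin_two
  obtain ⟨S₁, S₂, S₃, S₄, h₁, h₂, h₃, h₄, hS⟩ := (hK.comp_toProdCLM P).toProdCLM_comp P⁻¹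
  have hU : P⁻¹ * A * P = !![l₁, δ; 0, l₂] := by
    rw [Matrix.mul_assoc, hAP, Matrix.nonsing_inv_mul_cancel_left _ _ hP]
  have hconj (p : X × X) : (P.toProdCLMEquiv hP).symm (T (P.toProdCLMEquiv hP p)) =
      !![l₁, δ; 0, l₂].toProdCLM p + (S₁ p.1 + S₂ p.2, S₃ p.1 + S₄ p.2) := by
    rw [← hS, ← hU, Matrix.toProdCLM_mul, Matrix.toProdCLM_mul]
    simp [Matrix.toProdCLMEquiv]
  refine ⟨P.toProdCLMEquiv hP, l₁, l₂, S₁, S₂, S₃, S₄, h₁, h₂, h₃, h₄, ?_⟩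
  rcases hδ with rfl | rfl
  · exact .inr fun p => by rw [hconj]; ext <;> simp <;> abel
  · exact .inl fun p => by rw [hconj]; ext <;> simp <;> abel

theorem stmt_5 {X : Type*} [NormedAddCommGroup X] [NormedSpace ℂ X] [CompleteSpace X]
    (hform : ∀ A : X →L[ℂ] X, ∃ (w : ℂ) (S : X →L[ℂ] X),
      StrictlySingular S ∧ A = w • ContinuousLinearMap.id ℂ X + S)
    (T : (X × X) →L[ℂ] (X × X)) :
    ∃ (J : (X × X) ≃L[ℂ] (X × X)) (lam₁ lam₂ : ℂ) (S₁ S₂ S₃ S₄ : X →L[ℂ] X),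
      StrictlySingular S₁ ∧ StrictlySingular S₂ ∧ StrictlySingular S₃ ∧ StrictlySingular S₄ ∧
      ((∀ p : X × X, J.symm (T (J p)) =
          (lam₁ • p.1 + p.2 + S₁ p.1 + S₂ p.2, lam₂ • p.2 + S₃ p.1 + S₄ p.2)) ∨
       (∀ p : X × X, J.symm (T (J p)) =
          (lam₁ • p.1 + S₁ p.1 + S₂ p.2, lam₂ • p.2 + S₃ p.1 + S₄ p.2))) :=
  stmt_5_general hform T
end

section
/- Let X be a Banach space and T a bounded linear operator on X over ℂ. If the J-set J_T(x) has nonempty interior for some x ∈ X with x ≠ 0, then the spectrum of T intersects the unit circle, i.e. σ(T) ∩ {μ ∈ ℂ : |μ| = 1} ≠ ∅. -/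
open Filter Topology

/-!
If the spectrum of `T` misses the unit circle, the Riesz projection
`P = (2πi)⁻¹ ∮_{|z|=1} (z - T)⁻¹ dz` separates the inner and the outer part of the spectrum:
`P T ^ n → 0`, while `1 - P = Q n * T ^ n` with `Q n → 0`, where `Q n` is the integral of
`z ^ (-n) (z - T)⁻¹` over the boundary of an annulus enclosing the outer part. Along the orbits
defining `J_T(x)`, the first fact makes `P` vanish on `J_T(x)`, hence everywhere since `J_T(x)` has
interior, and the second gives `(1 - P) x = 0`. So `x = 0`.
-/

open Complex Metric Set Real

theorem ContinuousLinearMap.circleIntegral_comp_comm {E F : Type*} [NormedAddCommGroup E]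
    [NormedSpace ℂ E] [CompleteSpace E] [NormedAddCommGroup F] [NormedSpace ℂ F] [CompleteSpace F]
    (L : E →L[ℂ] F) {f : ℂ → E} {c : ℂ} {R : ℝ} (hf : CircleIntegrable f c R) :
    (∮ z in C(c, R), L (f z)) = L (∮ z in C(c, R), f z) := by
  simp only [circleIntegral, ← L.intervalIntegral_comp_comm hf.out, L.map_smul]

section CircleIntegralMul

variable {A : Type*} [NormedRing A] [NormedAlgebra ℂ A] [CompleteSpace A] {f : ℂ → A} {c : ℂ}
  {R : ℝ}

theorem mul_circleIntegral (a : A) (hf : CircleIntegrable f c R) :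
    a * (∮ z in C(c, R), f z) = ∮ z in C(c, R), a * f z :=
  ((ContinuousLinearMap.mul ℂ A a).circleIntegral_comp_comm hf).symm

theorem circleIntegral_mul (a : A) (hf : CircleIntegrable f c R) :
    (∮ z in C(c, R), f z) * a = ∮ z in C(c, R), f z * a :=
  (((ContinuousLinearMap.mul ℂ A).flip a).circleIntegral_comp_comm hf).symm

end CircleIntegralMul

theorem circleIntegral_zpow (m : ℤ) {R : ℝ} (hR : R ≠ 0) :
    (∮ z in C(0, R), z ^ m) = if m = -1 then 2 * π * I else 0 := by
  split_ifs with hm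
  · simpa [hm] using circleIntegral.integral_sub_center_inv 0 hR
  · simpa using circleIntegral.integral_sub_zpow_of_ne hm 0 0 R

theorem Metric.sphere_subset_closedBall_diff_ball {X : Type*} [PseudoMetricSpace X] {x : X}
    {r t ρ : ℝ} (hr : r ≤ t) (hρ : t ≤ ρ) : sphere x t ⊆ closedBall x ρ \ ball x r :=
  fun _ hz ↦ ⟨(mem_sphere.mp hz).trans_le hρ,
    fun h ↦ (mem_ball.mp h).not_ge (hr.trans (mem_sphere.mp hz).ge)⟩

namespace spectrum

section Algebra

variable {R A : Type*} [CommRing R] [Ring A] [Algebra R A] {a : A} {z : R}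

theorem commute_resolvent (hz : z ∈ resolventSet R a) : Commute a (resolvent a z) := by
  rw [resolvent_eq hz]
  exact Commute.units_inv_right ((Algebra.commute_algebraMap_right z a).sub_right (.refl a))

theorem mul_resolvent (hz : z ∈ resolventSet R a) : a * resolvent a z = z • resolvent a z - 1 := by
  have h : (algebraMap R A z - a) * resolvent a z = 1 := Ring.mul_inverse_cancel _ hz
  rw [sub_mul, ← Algebra.smul_def] at h
  rw [← h, sub_sub_cancel]

end Algebra

variable {A : Type*} [NormedRing A] [NormedAlgebra ℂ A] [CompleteSpace A] {a : A}

theorem differentiableOn_zpow_smul_resolvent (m : ℤ) {U : Set ℂ} (h0 : (0 : ℂ) ∉ U)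
    (hU : U ⊆ resolventSet ℂ a) : DifferentiableOn ℂ (fun z ↦ z ^ m • resolvent a z) U :=
  fun _ hz ↦ ((differentiableAt_zpow.mpr (.inl (ne_of_mem_of_not_mem hz h0))).smul
    (hasDerivAt_resolvent_const_left (hU hz)).differentiableAt).differentiableWithinAt

theorem circleIntegrable_zpow_smul_resolvent (m : ℤ) {s : ℝ} (hs : 0 < s)
    (ha : sphere (0 : ℂ) s ⊆ resolventSet ℂ a) :
    CircleIntegrable (fun z ↦ z ^ m • resolvent a z) 0 s :=
  ((differentiableOn_zpow_smul_resolvent m (by simpa using hs.ne) ha).continuousOn).circleIntegrable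
    hs.le

end spectrum

section CircleResolventIntegral

open spectrum

variable {A : Type*} [NormedRing A] [NormedAlgebra ℂ A] {a : A}

variable (a) in
/-- When `m ≥ 0` and the circle `|z| = s` lies in the resolvent set, this is `a ^ m` times the Riesz
projection onto the part of the spectrum of `a` inside the circle. -/
noncomputable def circleResolventIntegral (m : ℤ) (s : ℝ) : A :=
  (2 * π * I)⁻¹ • ∮ z in C(0, s), z ^ m • resolvent a z

theorem norm_circleResolventIntegral_le (m : ℤ) {s C : ℝ} (hs : 0 < s)
    (hC : ∀ z ∈ sphere (0 : ℂ) s, ‖resolvent a z‖ ≤ C) :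
    ‖circleResolventIntegral a m s‖ ≤ s ^ (m + 1) * C := by
  calc ‖circleResolventIntegral a m s‖ ≤ s * (s ^ m * C) := by
        refine circleIntegral.norm_two_pi_i_inv_smul_integral_le_of_norm_le_const hs.le
          fun z hz ↦ ?_
        rw [norm_smul, norm_zpow, mem_sphere_zero_iff_norm.mp hz]
        gcongr
        exact hC z hz
    _ = s ^ (m + 1) * C := by rw [zpow_add_one₀ hs.ne']; ring

variable [CompleteSpace A]

theorem mul_circleResolventIntegral (m : ℤ) {s : ℝ} (hs : 0 < s)
    (ha : sphere (0 : ℂ) s ⊆ resolventSet ℂ a) :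
    a * circleResolventIntegral a m s =
      circleResolventIntegral a (m + 1) s - if m = -1 then 1 else 0 := by
  have h0 : (0 : ℂ) ∉ sphere 0 s := by simpa using hs.ne
  have hsplit : EqOn (fun z : ℂ ↦ a * (z ^ m • resolvent a z))
      (fun z ↦ z ^ (m + 1) • resolvent a z - z ^ m • (1 : A)) (sphere 0 s) := fun z hz ↦ by
    simp only [mul_smul_comm, mul_resolvent (ha hz), smul_sub, smul_smul,
      ← zpow_add_one₀ (ne_of_mem_of_not_mem hz h0)]
  have hpow : CircleIntegrable (fun z : ℂ ↦ z ^ m • (1 : A)) 0 s :=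
    (((continuousOn_zpow₀ m).mono fun z hz ↦ ne_of_mem_of_not_mem hz h0).smul
      continuousOn_const).circleIntegrable hs.le
  rw [circleResolventIntegral, mul_smul_comm,
    mul_circleIntegral a (circleIntegrable_zpow_smul_resolvent m hs ha),
    circleIntegral.integral_congr hs.le hsplit,
    circleIntegral.integral_sub (circleIntegrable_zpow_smul_resolvent _ hs ha) hpow,
    circleIntegral.integral_smul_const, circleIntegral_zpow m hs.ne', smul_sub,
    ← circleResolventIntegral]
  split_ifs
  · rw [smul_smul, inv_mul_cancel₀ two_pi_I_ne_zero, one_smul]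
  · rw [zero_smul, smul_zero]

theorem commute_circleResolventIntegral (m : ℤ) {s : ℝ} (hs : 0 < s)
    (ha : sphere (0 : ℂ) s ⊆ resolventSet ℂ a) : Commute a (circleResolventIntegral a m s) := by
  have hint := circleIntegrable_zpow_smul_resolvent m hs ha
  have hcomm : EqOn (fun z : ℂ ↦ a * (z ^ m • resolvent a z))
      (fun z ↦ (z ^ m • resolvent a z) * a) (sphere 0 s) := fun z hz ↦ by
    simp only [mul_smul_comm, smul_mul_assoc, (commute_resolvent (ha hz)).eq]
  rw [Commute, SemiconjBy, circleResolventIntegral, mul_smul_comm, smul_mul_assoc,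
    mul_circleIntegral a hint, circleIntegral_mul a hint,
    circleIntegral.integral_congr hs.le hcomm]

theorem circleResolventIntegral_eq_of_annulus (m : ℤ) {s₁ s₂ : ℝ} (hs₁ : 0 < s₁) (h : s₁ ≤ s₂)
    (ha : closedBall (0 : ℂ) s₂ \ ball 0 s₁ ⊆ resolventSet ℂ a) :
    circleResolventIntegral a m s₂ = circleResolventIntegral a m s₁ := by
  have hd := differentiableOn_zpow_smul_resolvent m (fun h ↦ h.2 (mem_ball_self hs₁)) ha
  rw [circleResolventIntegral, circleResolventIntegral,
    circleIntegral_eq_of_differentiable_on_annulus_off_countable hs₁ h countable_empty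
      hd.continuousOn fun z hz ↦ hd.differentiableAt ?_]
  exact mem_of_superset ((isOpen_ball.sdiff isClosed_closedBall).mem_nhds hz.1)
    (sdiff_subset_sdiff ball_subset_closedBall ball_subset_closedBall)

theorem circleResolventIntegral_zero_of_norm_mul_lt {s : ℝ} (hs : ‖a‖ * ‖(1 : A)‖ < s) :
    circleResolventIntegral a 0 s = 1 := by
  have hs₀ : 0 < s := (by positivity : (0 : ℝ) ≤ ‖a‖ * ‖(1 : A)‖).trans_lt hs
  have hres : ∀ z : ℂ, s ≤ ‖z‖ → z ∈ resolventSet ℂ a :=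
    fun z hz ↦ mem_resolventSet_of_norm_lt_mul (hs.trans_le hz)
  rw [← sub_eq_zero, ← norm_le_zero_iff]
  refine le_of_forall_pos_le_add fun ε hε ↦ ?_
  obtain ⟨N, -, hN⟩ := (atTop_basis.cobounded_of_norm.eventually_iff).mp
    ((resolvent_tendsto_cobounded (𝕜 := ℂ) a).eventually
      (closedBall_mem_nhds (0 : A) (div_pos hε (by positivity : (0 : ℝ) < ‖a‖ + 1))))
  set R := max s N
  have hR₀ : 0 < R := hs₀.trans_le (le_max_left _ _)
  have hsphere : sphere (0 : ℂ) R ⊆ resolventSet ℂ a := fun z hz ↦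
    hres z ((le_max_left _ _).trans (mem_sphere_zero_iff_norm.mp hz).ge)
  have hbound : ∀ z ∈ sphere (0 : ℂ) R, ‖resolvent a z‖ ≤ ε / (‖a‖ + 1) := fun z hz ↦ by
    simpa using hN ((le_max_right s N).trans (mem_sphere_zero_iff_norm.mp hz).ge)
  -- `F 0 - 1 = a * F (-1)`, and `F (-1)` is small on large circles as the resolvent vanishes at `∞`.
  have hdiff : circleResolventIntegral a 0 s - 1 = a * circleResolventIntegral a (-1) R := by
    rw [mul_circleResolventIntegral (-1) hR₀ hsphere, if_pos rfl, neg_add_cancel,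
      circleResolventIntegral_eq_of_annulus 0 hs₀ (le_max_left _ _)
        fun z hz ↦ hres z (not_lt.mp fun h ↦ hz.2 (mem_ball_zero_iff.mpr h))]
  calc ‖circleResolventIntegral a 0 s - 1‖
      ≤ ‖a‖ * (R ^ (-1 + 1 : ℤ) * (ε / (‖a‖ + 1))) := by
        rw [hdiff]
        exact norm_mul_le_of_le le_rfl (norm_circleResolventIntegral_le (-1) hR₀ hbound)
    _ ≤ 0 + ε := by
        rw [neg_add_cancel, zpow_zero, one_mul, zero_add, mul_div_assoc',
          div_le_iff₀ (by positivity)]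
        nlinarith

theorem exists_norm_circleResolventIntegral_le {s : ℝ} (hs : 0 < s)
    (ha : sphere (0 : ℂ) s ⊆ resolventSet ℂ a) :
    ∃ C, ∀ m : ℤ, ‖circleResolventIntegral a m s‖ ≤ C * s ^ m := by
  obtain ⟨C, hC⟩ := (isCompact_sphere (0 : ℂ) s).exists_bound_of_continuousOn fun z hz ↦
    (hasDerivAt_resolvent_const_left (ha hz)).continuousAt.continuousWithinAt
  refine ⟨s * C, fun m ↦ (norm_circleResolventIntegral_le m hs hC).trans_eq ?_⟩
  rw [zpow_add_one₀ hs.ne']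
  ring

theorem tendsto_circleResolventIntegral_natCast {s : ℝ} (hs₀ : 0 < s) (hs₁ : s < 1)
    (ha : sphere (0 : ℂ) s ⊆ resolventSet ℂ a) :
    Tendsto (fun n : ℕ ↦ circleResolventIntegral a n s) atTop (𝓝 0) := by
  obtain ⟨C, hC⟩ := exists_norm_circleResolventIntegral_le hs₀ ha
  refine squeeze_zero_norm (fun n ↦ by simpa using hC n) ?_
  simpa using (tendsto_pow_atTop_nhds_zero_of_lt_one hs₀.le hs₁).const_mul C

theorem tendsto_circleResolventIntegral_neg_natCast {s : ℝ} (hs : 1 < s)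
    (ha : sphere (0 : ℂ) s ⊆ resolventSet ℂ a) :
    Tendsto (fun n : ℕ ↦ circleResolventIntegral a (-n) s) atTop (𝓝 0) := by
  obtain ⟨C, hC⟩ := exists_norm_circleResolventIntegral_le (zero_lt_one.trans hs) ha
  refine squeeze_zero_norm (fun n ↦ by simpa using hC (-n)) ?_
  simpa using (tendsto_pow_atTop_nhds_zero_of_lt_one (by positivity)
    (inv_lt_one_of_one_lt₀ hs)).const_mul C

theorem pow_mul_circleResolventIntegral_zero {s : ℝ} (hs : 0 < s)
    (ha : sphere (0 : ℂ) s ⊆ resolventSet ℂ a) (n : ℕ) :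
    a ^ n * circleResolventIntegral a 0 s = circleResolventIntegral a n s := by
  induction n with
  | zero => simp
  | succ n ih =>
    rw [pow_succ', mul_assoc, ih, mul_circleResolventIntegral _ hs ha, if_neg (by omega),
      sub_zero, Nat.cast_succ]

theorem sub_circleResolventIntegral_neg_mul_pow {s₁ s₂ : ℝ} (hs₁ : 0 < s₁) (hs₂ : 0 < s₂)
    (ha₁ : sphere (0 : ℂ) s₁ ⊆ resolventSet ℂ a) (ha₂ : sphere (0 : ℂ) s₂ ⊆ resolventSet ℂ a)
    (n : ℕ) :
    (circleResolventIntegral a (-n) s₂ - circleResolventIntegral a (-n) s₁) * a ^ n =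
      circleResolventIntegral a 0 s₂ - circleResolventIntegral a 0 s₁ := by
  induction n with
  | zero => simp
  | succ n ih =>
    have hcomm := (commute_circleResolventIntegral (-(n + 1 : ℕ)) hs₂ ha₂).sub_right
      (commute_circleResolventIntegral (-(n + 1 : ℕ)) hs₁ ha₁)
    rw [pow_succ', ← mul_assoc, ← hcomm.eq, mul_sub, mul_circleResolventIntegral _ hs₂ ha₂,
      mul_circleResolventIntegral _ hs₁ ha₁, sub_sub_sub_cancel_right,
      show -((n + 1 : ℕ) : ℤ) + 1 = -n by push_cast; ring, ih]

theorem exists_annulus_subset_resolventSet (h : ∀ z ∈ spectrum ℂ a, ‖z‖ ≠ 1) :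
    ∃ r ρ : ℝ, 0 < r ∧ r < 1 ∧ 1 < ρ ∧ closedBall (0 : ℂ) ρ \ ball 0 r ⊆ resolventSet ℂ a := by
  have hclosed : IsClosed (norm '' spectrum ℂ a) :=
    ((spectrum.isCompact a).image continuous_norm).isClosed
  obtain ⟨ε, hε, hball⟩ := Metric.isOpen_iff.mp hclosed.isOpen_compl 1
    fun ⟨z, hz, h1⟩ ↦ h z hz h1
  obtain ⟨δ, hδ₀, hδ₁, hδε⟩ : ∃ δ, 0 < δ ∧ δ < 1 ∧ δ < ε :=
    ⟨min ε 1 / 2, by positivity, by linarith [min_le_right ε 1], by linarith [min_le_left ε 1]⟩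
  refine ⟨1 - δ, 1 + δ, by linarith, by linarith, by linarith, ?_⟩
  rintro z ⟨hz₁, hz₂⟩
  by_contra hz
  refine hball ?_ ⟨z, hz, rfl⟩
  rw [mem_closedBall_zero_iff] at hz₁
  rw [mem_ball_zero_iff, not_lt] at hz₂
  rw [mem_ball, Real.dist_eq, abs_lt]
  constructor <;> linarith

theorem exists_dichotomy_of_spectrum_norm_ne_one (h : ∀ z ∈ spectrum ℂ a, ‖z‖ ≠ 1) :
    ∃ (P : A) (Q : ℕ → A), Tendsto (fun n ↦ P * a ^ n) atTop (𝓝 0) ∧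
      Tendsto Q atTop (𝓝 0) ∧ ∀ n, Q n * a ^ n = 1 - P := by
  obtain ⟨r, ρ, hr₀, hr₁, hρ, hann⟩ := exists_annulus_subset_resolventSet h
  have hsphere : ∀ t, r ≤ t → t ≤ ρ → sphere (0 : ℂ) t ⊆ resolventSet ℂ a :=
    fun t hrt htρ ↦ (sphere_subset_closedBall_diff_ball hrt htρ).trans hann
  obtain ⟨R, hR, hR₁⟩ : ∃ R, ‖a‖ * ‖(1 : A)‖ < R ∧ 1 < R := by
    simpa only [max_lt_iff] using exists_gt (max (‖a‖ * ‖(1 : A)‖) 1)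
  have hsphereR : sphere (0 : ℂ) R ⊆ resolventSet ℂ a := fun z hz ↦
    mem_resolventSet_of_norm_lt_mul (by rwa [mem_sphere_zero_iff_norm.mp hz])
  refine ⟨circleResolventIntegral a 0 1,
    fun n ↦ circleResolventIntegral a (-n) R - circleResolventIntegral a (-n) ρ, ?_, ?_, fun n ↦ ?_⟩
  · have hP : ∀ n : ℕ, circleResolventIntegral a 0 1 * a ^ n = circleResolventIntegral a n r := by
      intro n
      rw [← ((commute_circleResolventIntegral 0 one_pos (hsphere 1 hr₁.le hρ.le)).pow_left n).eq,
        pow_mul_circleResolventIntegral_zero one_pos (hsphere 1 hr₁.le hρ.le),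
        circleResolventIntegral_eq_of_annulus n hr₀ hr₁.le
          ((sdiff_subset_sdiff_left (closedBall_subset_closedBall hρ.le)).trans hann)]
    simpa only [hP] using
      tendsto_circleResolventIntegral_natCast hr₀ hr₁ (hsphere r le_rfl (by linarith))
  · simpa using (tendsto_circleResolventIntegral_neg_natCast hR₁ hsphereR).sub
      (tendsto_circleResolventIntegral_neg_natCast hρ (hsphere ρ (by linarith) le_rfl))
  · rw [sub_circleResolventIntegral_neg_mul_pow (by linarith) (by linarith)
      (hsphere ρ (by linarith) le_rfl) hsphereR, circleResolventIntegral_zero_of_norm_mul_lt hR,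
      circleResolventIntegral_eq_of_annulus 0 one_pos hρ.le
        ((sdiff_subset_sdiff_right (ball_subset_ball hr₁.le)).trans hann)]

end CircleResolventIntegral

section JSet

variable {𝕜 X : Type*} [NontriviallyNormedField 𝕜] [NormedAddCommGroup X] [NormedSpace 𝕜 X]
  {T L : X →L[𝕜] X} {x y : X}

theorem apply_eq_zero_of_mem_JSet (hL : Tendsto (fun n ↦ L * T ^ n) atTop (𝓝 0))
    (hy : y ∈ JSet T x) : L y = 0 := by
  obtain ⟨k, hk, u, hu, hTu⟩ := hy
  have hlim : Tendsto (fun n ↦ (L * T ^ k n) (u n)) atTop (𝓝 ((0 : X →L[𝕜] X) x)) :=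
    (isBoundedBilinearMap_apply.continuous.tendsto _).comp
      ((hL.comp hk.tendsto_atTop).prodMk_nhds hu)
  rw [zero_apply] at hlim
  exact tendsto_nhds_unique ((L.continuous.tendsto y).comp hTu) hlim

theorem eq_zero_of_nonempty_interior_JSet (hL : Tendsto (fun n ↦ L * T ^ n) atTop (𝓝 0))
    (h : (interior (JSet T x)).Nonempty) : L = 0 := by
  have hker : LinearMap.ker (L : X →ₗ[𝕜] X) = ⊤ :=
    Submodule.eq_top_of_nonempty_interior' _
      (h.mono (interior_mono fun y hy ↦ apply_eq_zero_of_mem_JSet hL hy))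
  ext v
  simpa using hker.ge (Submodule.mem_top (x := v))

theorem apply_eq_zero_of_nonempty_JSet {Q : ℕ → X →L[𝕜] X} (hQ : Tendsto Q atTop (𝓝 0))
    (hQT : ∀ n, Q n * T ^ n = L) (h : (JSet T x).Nonempty) : L x = 0 := by
  obtain ⟨y, k, hk, u, hu, hTu⟩ := h
  have hlim : Tendsto (fun n ↦ Q (k n) ((T ^ k n) (u n))) atTop (𝓝 ((0 : X →L[𝕜] X) y)) :=
    (isBoundedBilinearMap_apply.continuous.tendsto _).comp
      ((hQ.comp hk.tendsto_atTop).prodMk_nhds hTu)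
  rw [zero_apply] at hlim
  refine tendsto_nhds_unique ((L.continuous.tendsto x).comp hu) (hlim.congr fun n ↦ ?_)
  rw [← hQT (k n)]
  rfl

end JSet

theorem stmt_7 {X : Type*} [NormedAddCommGroup X] [NormedSpace ℂ X] [CompleteSpace X]
    (T : X →L[ℂ] X) (x : X) (hx : x ≠ 0) (h : (interior (JSet T x)).Nonempty) :
    spectrum ℂ T ∩ {μ : ℂ | ‖μ‖ = 1} ≠ ∅ := by
  refine fun hT ↦ hx ?_
  obtain ⟨P, Q, hP, hQ, hQP⟩ :=
    exists_dichotomy_of_spectrum_norm_ne_one fun z hz h1 ↦ hT.subset ⟨hz, h1⟩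
  have hP0 : P = 0 := eq_zero_of_nonempty_interior_JSet hP h
  simpa [hP0] using apply_eq_zero_of_nonempty_JSet hQ hQP (h.mono interior_subset)
end

section
/- Let X be a complex Banach space and T a bounded linear operator on X. If the J-set J_T(x) has nonempty interior for some x ∈ X with x ≠ 0, then the operator T − λ·I has dense range for each λ ∈ ℂ with |λ| ≤ 1. -/
/-!
If `T - λ` has non-dense range, Hahn–Banach gives a functional `f ≠ 0` with `f ∘ T = λ f`.
Then `‖f (T^k u)‖ = ‖λ‖^k ‖f u‖`, and since `‖λ‖ ≤ 1` the powers `‖λ‖^k` converge, so `‖f‖` is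
constant on `J_T(x)`. A nonzero functional is an open map and spheres in `ℂ` have empty interior,
so `J_T(x)` has empty interior.
-/

open Filter Topology

open Set Metric

section Dual

variable {𝕜 E F : Type*} [RCLike 𝕜] [NormedAddCommGroup E] [NormedSpace 𝕜 E]
  [NormedAddCommGroup F] [NormedSpace 𝕜 F]

/-- Hahn–Banach applied in the quotient by the closure of the range. -/
theorem ContinuousLinearMap.exists_ne_zero_comp_eq_zero_of_not_denseRange {S : E →L[𝕜] F}
    (hS : ¬ DenseRange S) : ∃ f : StrongDual 𝕜 F, f ≠ 0 ∧ f.comp S = 0 := by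
  set p := (LinearMap.range (S : E →ₗ[𝕜] F)).topologicalClosure
  have : IsClosed (p : Set F) := Submodule.isClosed_topologicalClosure _
  obtain ⟨y, hy⟩ : ∃ y, y ∉ p := by
    by_contra! hall
    refine hS (denseRange_iff_closure_range.2 (eq_univ_of_forall fun z => ?_))
    have hz := hall z
    rwa [← SetLike.mem_coe, Submodule.topologicalClosure_coe, LinearMap.coe_range,
      ContinuousLinearMap.coe_coe] at hz
  have hQy : p.mkQL y ≠ 0 := by
    rwa [Submodule.mkQL_apply, Submodule.mkQ_apply, ne_eq, Submodule.Quotient.mk_eq_zero]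
  obtain ⟨g, -, hgy⟩ := exists_dual_vector 𝕜 (p.mkQL y) (norm_ne_zero_iff.2 hQy)
  refine ⟨g.comp p.mkQL, fun hf => hQy ?_, ?_⟩
  · have hgy0 : g (p.mkQL y) = 0 := congrArg (fun f : StrongDual 𝕜 F => f y) hf
    rwa [hgy, RCLike.ofReal_eq_zero, norm_eq_zero] at hgy0
  · ext z
    have hz : S z ∈ p := Submodule.le_topologicalClosure _ (LinearMap.mem_range_self _ z)
    simp [Submodule.mkQL_apply, (Submodule.Quotient.mk_eq_zero p).2 hz]

theorem StrongDual.interior_preimage_sphere_eq_empty {f : StrongDual 𝕜 E} (hf : f ≠ 0)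
    (a : 𝕜) (r : ℝ) : interior (f ⁻¹' sphere a r) = ∅ := by
  rw [← (f.isOpenMap_of_ne_zero hf).preimage_interior_eq_interior_preimage f.continuous,
    interior_sphere', preimage_empty]

end Dual

section JSet

variable {𝕜 X : Type*} [NontriviallyNormedField 𝕜] [NormedAddCommGroup X] [NormedSpace 𝕜 X]

theorem StrongDual.comp_pow_eq_pow_smul {T : X →L[𝕜] X} {f : StrongDual 𝕜 X} {lam : 𝕜}
    (hf : f.comp T = lam • f) (k : ℕ) : f.comp (T ^ k) = lam ^ k • f := by
  induction k with
  | zero => ext; simp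
  | succ k ih =>
    rw [pow_succ, ContinuousLinearMap.mul_def, ← ContinuousLinearMap.comp_assoc, ih,
      ContinuousLinearMap.smul_comp, hf, smul_smul, pow_succ]

theorem exists_tendsto_pow_of_nonneg_of_le_one {a : ℝ} (h₀ : 0 ≤ a) (h₁ : a ≤ 1) :
    ∃ L, Tendsto (fun n : ℕ => a ^ n) atTop (𝓝 L) :=
  ⟨_, tendsto_atTop_ciInf (fun _ _ hmn => pow_le_pow_of_le_one h₀ h₁ hmn)
    ⟨0, forall_mem_range.2 fun n => pow_nonneg h₀ n⟩⟩

theorem JSet_subset_preimage_sphere (T : X →L[𝕜] X) (x : X) {f : StrongDual 𝕜 X} {lam : 𝕜}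
    (hf : f.comp T = lam • f) (hlam : ‖lam‖ ≤ 1) : ∃ r, JSet T x ⊆ f ⁻¹' sphere 0 r := by
  obtain ⟨L, hL⟩ := exists_tendsto_pow_of_nonneg_of_le_one (norm_nonneg lam) hlam
  refine ⟨L * ‖f x‖, ?_⟩
  rintro y ⟨k, hk, u, hu, hTu⟩
  rw [mem_preimage, mem_sphere_zero_iff_norm]
  have hnorm : ∀ n, ‖f ((T ^ k n) (u n))‖ = ‖lam‖ ^ k n * ‖f (u n)‖ := fun n => by
    rw [← ContinuousLinearMap.comp_apply, StrongDual.comp_pow_eq_pow_smul hf,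
      smul_apply, smul_eq_mul, norm_mul, norm_pow]
  have hlim : Tendsto (fun n => ‖f ((T ^ k n) (u n))‖) atTop (𝓝 (L * ‖f x‖)) := by
    rw [funext hnorm]
    exact (hL.comp hk.tendsto_atTop).mul ((f.continuous.tendsto x).comp hu).norm
  exact tendsto_nhds_unique ((f.continuous.tendsto y).comp hTu).norm hlim

end JSet

theorem stmt_8_general {X : Type*} [NormedAddCommGroup X] [NormedSpace ℂ X]
    (T : X →L[ℂ] X) (x : X) (h : (interior (JSet T x)).Nonempty) :
    ∀ lam : ℂ, ‖lam‖ ≤ 1 → DenseRange (T - lam • ContinuousLinearMap.id ℂ X) := by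
  intro lam hlam
  by_contra hd
  obtain ⟨f, hf0, hfS⟩ := ContinuousLinearMap.exists_ne_zero_comp_eq_zero_of_not_denseRange hd
  have hfT : f.comp T = lam • f := by
    rwa [ContinuousLinearMap.comp_sub, ContinuousLinearMap.comp_smul,
      ContinuousLinearMap.comp_id, sub_eq_zero] at hfS
  obtain ⟨r, hr⟩ := JSet_subset_preimage_sphere T x hfT hlam
  exact h.ne_empty <| subset_empty_iff.1 <|
    (interior_mono hr).trans (StrongDual.interior_preimage_sphere_eq_empty hf0 0 r).subset

theorem stmt_8 {X : Type*} [NormedAddCommGroup X] [NormedSpace ℂ X] [CompleteSpace X]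
    (T : X →L[ℂ] X) (x : X) (hx : x ≠ 0) (h : (interior (JSet T x)).Nonempty) :
    ∀ lam : ℂ, ‖lam‖ ≤ 1 → DenseRange (T - lam • ContinuousLinearMap.id ℂ X) :=
  stmt_8_general T x h
end

section
/- Let X be a non-separable reflexive Banach space and Y ⊆ X a separable closed subspace. Then there exists a separable closed subspace W of X containing Y and a bounded linear projection P : X → X with range W (i.e. P∘P = P and P(X) = W) such that ‖P‖ = 1. -/
/-!
By a countable back-and-forth construction we find a separable closed subspace `W ⊇ Y` of `X`
and a subspace `F` of `X*` such that `F` contains norming functionals for a dense subset of `W`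
(so `F` separates the points of `W`) and `W` almost norms a dense subset of `F` (so
`‖f‖ = ‖f|_W‖` for `f ∈ F`). For `x ∈ X` the functional `f|_W ↦ f x` on `F|_W ⊆ W*` is then
well defined of norm at most `‖x‖`; composing a Hahn-Banach extension of it with restriction
gives an element of `X**`, that is, by reflexivity, evaluation at some `z`. This `z` lies in `W`,
has `‖z‖ ≤ ‖x‖` and agrees with `x` on `F`, which determines it, so `P x := z` is a linear
projection onto `W` of norm one.
-/

open Filter Topology

open TopologicalSpace

lemma exists_countable_interleaved {α β : Type*} {S : Set α} (hS : S.Countable)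
    (φ : Set β → Set α) (ψ : Set α → Set β) (hφ : ∀ t, t.Countable → (φ t).Countable)
    (hψ : ∀ s, s.Countable → (ψ s).Countable) :
    ∃ (A : ℕ → Set α) (B : ℕ → Set β), Monotone A ∧ Monotone B ∧
      (∀ n, (A n).Countable ∧ (B n).Countable) ∧ S ⊆ A 0 ∧
      ∀ n, φ (B n) ⊆ A (n + 1) ∧ ψ (A n) ⊆ B (n + 1) := by
  let step : Set α × Set β → Set α × Set β := fun p => (p.1 ∪ φ p.2, p.2 ∪ ψ p.1)
  have hsucc : ∀ n, step^[n + 1] (S, ∅) = step (step^[n] (S, ∅)) :=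
    fun n => Function.iterate_succ_apply' _ _ _
  refine ⟨fun n => (step^[n] (S, ∅)).1, fun n => (step^[n] (S, ∅)).2,
    monotone_nat_of_le_succ fun n => ?_, monotone_nat_of_le_succ fun n => ?_,
    fun n => ?_, subset_rfl, fun n => ?_⟩
  · simp only [hsucc]; exact Set.subset_union_left
  · simp only [hsucc]; exact Set.subset_union_left
  · induction n with
    | zero => exact ⟨hS, Set.countable_empty⟩
    | succ n ih => simp only [hsucc]; exact ⟨ih.1.union (hφ _ ih.2), ih.2.union (hψ _ ih.1)⟩
  · simp only [hsucc]; exact ⟨Set.subset_union_right, Set.subset_union_right⟩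

lemma exists_countable_dense_span_fun (R M : Type*) [Semiring R] [TopologicalSpace R]
    [SeparableSpace R] [AddCommMonoid M] [Module R M] [TopologicalSpace M] [ContinuousAdd M]
    [ContinuousSMul R M] :
    ∃ d : Set M → Set M, ∀ s, s.Countable →
      (d s).Countable ∧ (Submodule.span R s : Set M) ⊆ closure (d s) := by
  choose d hd using fun s : Set M => show ∃ c : Set M, s.Countable →
      c.Countable ∧ (Submodule.span R s : Set M) ⊆ closure c by
    by_cases hs : s.Countable
    · obtain ⟨c, hc, hsc⟩ := hs.isSeparable.span (R := R)
      exact ⟨c, fun _ => ⟨hc, hsc⟩⟩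
    · exact ⟨∅, fun h => (hs h).elim⟩
  exact ⟨d, hd⟩

lemma closure_span_iUnion_subset_closure_iUnion {R M : Type*} [Semiring R] [AddCommMonoid M]
    [Module R M] [TopologicalSpace M] {A D : ℕ → Set M} (hA : Monotone A)
    (hD : ∀ n, (Submodule.span R (A n) : Set M) ⊆ closure (D n)) :
    closure (Submodule.span R (⋃ n, A n) : Set M) ⊆ closure (⋃ n, D n) := by
  refine closure_minimal (fun a ha => ?_) isClosed_closure
  have hdir : Directed (· ≤ ·) fun n => Submodule.span R (A n) :=
    (Submodule.span_monotone.comp hA).directed_le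
  rw [SetLike.mem_coe, Submodule.span_iUnion, Submodule.mem_iSup_of_directed _ hdir] at ha
  obtain ⟨n, hn⟩ := ha
  exact closure_mono (Set.subset_iUnion D n) (hD n hn)

section Dual

variable {E : Type*} [NormedAddCommGroup E] [NormedSpace ℝ E]

lemma Submodule.exists_dual_eq_zero_ne_zero_of_notMem {W : Submodule ℝ E}
    (hW : IsClosed (W : Set E)) {z : E} (hz : z ∉ W) :
    ∃ g : StrongDual ℝ E, (∀ w ∈ W, g w = 0) ∧ g z ≠ 0 := by
  obtain ⟨f, u, hfW, hu⟩ := geometric_hahn_banach_closed_point W.convex hW hz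
  have hu0 : 0 < u := by simpa using hfW 0 W.zero_mem
  refine ⟨f, fun w hw => ?_, fun h => by linarith⟩
  -- `f` is bounded above on the subspace `W`, so it vanishes there
  by_contra hfw
  have := hfW (((u + 1) / f w) • w) (W.smul_mem _ hw)
  rw [map_smul, smul_eq_mul, div_mul_cancel₀ _ hfw] at this
  linarith

lemma norm_comp_subtypeL_le (g : StrongDual ℝ E) (W : Submodule ℝ E) :
    ‖g.comp W.subtypeL‖ ≤ ‖g‖ :=
  (g.opNorm_comp_le _).trans (mul_le_of_le_one_right (norm_nonneg g) W.norm_subtypeL_le)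

lemma eq_zero_of_mem_closure_of_forall_norming {F : Set (StrongDual ℝ E)} {D : Set E}
    (hD : ∀ a ∈ D, ∃ f ∈ F, ‖f‖ ≤ 1 ∧ f a = ‖a‖) {w : E} (hw : w ∈ closure D)
    (hF : ∀ f ∈ F, f w = 0) : w = 0 := by
  have hDw : D ⊆ {a | ‖a‖ ≤ ‖a - w‖} := by
    intro a ha
    obtain ⟨f, hf, hf1, hfa⟩ := hD a ha
    calc ‖a‖ = f (a - w) := by rw [map_sub, hF f hf, sub_zero, hfa]
      _ ≤ ‖f‖ * ‖a - w‖ := (le_abs_self _).trans (f.le_opNorm _)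
      _ ≤ ‖a - w‖ := mul_le_of_le_one_left (norm_nonneg _) hf1
  have := closure_minimal hDw
    (isClosed_le continuous_norm (continuous_norm.comp (continuous_sub_right w))) hw
  simpa using this

lemma norm_le_norm_comp_subtypeL_of_mem_closure {W : Submodule ℝ E} {D : Set (StrongDual ℝ E)}
    (hD : ∀ g ∈ D, ‖g‖ ≤ ‖g.comp W.subtypeL‖) {f : StrongDual ℝ E} (hf : f ∈ closure D) :
    ‖f‖ ≤ ‖f.comp W.subtypeL‖ :=
  closure_minimal hD (isClosed_le continuous_norm
    ((ContinuousLinearMap.compL ℝ W E ℝ).flip W.subtypeL).continuous.norm) hf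

lemma norm_le_norm_comp_subtypeL_of_approx (g : StrongDual ℝ E) {W : Submodule ℝ E}
    (v : ℕ → E) (hvW : ∀ k, v k ∈ W) (hv1 : ∀ k, ‖v k‖ < 1)
    (hv : ∀ k : ℕ, ‖g‖ - 1 / (k + 1) < ‖g (v k)‖) : ‖g‖ ≤ ‖g.comp W.subtypeL‖ := by
  refine le_of_forall_pos_lt_add fun ε hε => ?_
  obtain ⟨k, hk⟩ := exists_nat_one_div_lt hε
  have : ‖g (v k)‖ ≤ ‖g.comp W.subtypeL‖ :=
    calc ‖g (v k)‖ = ‖g.comp W.subtypeL ⟨v k, hvW k⟩‖ := rfl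
      _ ≤ ‖g.comp W.subtypeL‖ :=
        ((g.comp W.subtypeL).le_opNorm_of_le (hv1 k).le).trans_eq (mul_one _)
  linarith [hv k]

theorem exists_separable_norming_pair {S : Set E} (hS : S.Countable) :
    ∃ (W : Submodule ℝ E) (F : Submodule ℝ (StrongDual ℝ E)), IsClosed (W : Set E) ∧
      IsSeparable (W : Set E) ∧ S ⊆ W ∧ (∀ w ∈ W, (∀ f ∈ F, f w = 0) → w = 0) ∧
      ∀ f ∈ F, ‖f‖ ≤ ‖f.comp W.subtypeL‖ := by
  obtain ⟨dE, hdE⟩ := exists_countable_dense_span_fun ℝ E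
  obtain ⟨dF, hdF⟩ := exists_countable_dense_span_fun ℝ (StrongDual ℝ E)
  choose nf hnf1 hnf using exists_dual_vector'' ℝ (E := E)
  choose v hv1 hv using fun (g : StrongDual ℝ E) (k : ℕ) =>
    g.exists_lt_apply_of_lt_opNorm (r := ‖g‖ - 1 / (k + 1)) (sub_lt_self _ (by positivity))
  obtain ⟨A, B, hAm, hBm, hABc, hSA, hAB⟩ := exists_countable_interleaved hS
    (fun t => ⋃ g ∈ dF t, Set.range (v g)) (fun s => nf '' dE s)
    (fun t ht => ((hdF t ht).1.biUnion fun g _ => Set.countable_range (v g)))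
    (fun s hs => (hdE s hs).1.image nf)
  set W := (Submodule.span ℝ (⋃ n, A n)).topologicalClosure
  have hAW : ∀ n, A n ⊆ W := fun n =>
    (Set.subset_iUnion A n).trans (Submodule.subset_span.trans
      (Submodule.le_topologicalClosure _))
  refine ⟨W, Submodule.span ℝ (⋃ n, B n), Submodule.isClosed_topologicalClosure _, ?_,
    hSA.trans (hAW 0), fun w hw hwF => ?_, fun f hf => ?_⟩
  · rw [Submodule.topologicalClosure_coe]
    exact (Set.countable_iUnion fun n => (hABc n).1).isSeparable.span.closure
  · refine eq_zero_of_mem_closure_of_forall_norming (D := ⋃ n, dE (A n)) ?_ ?_ hwF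
    · rintro a ⟨_, ⟨n, rfl⟩, ha⟩
      refine ⟨nf a, Submodule.subset_span (Set.mem_iUnion.2 ⟨n + 1, (hAB n).2 ⟨a, ha, rfl⟩⟩),
        hnf1 a, hnf a⟩
    · rw [← SetLike.mem_coe, Submodule.topologicalClosure_coe] at hw
      exact closure_span_iUnion_subset_closure_iUnion hAm (fun n => (hdE _ (hABc n).1).2) hw
  · refine norm_le_norm_comp_subtypeL_of_mem_closure (D := ⋃ n, dF (B n)) ?_
      (closure_span_iUnion_subset_closure_iUnion hBm (fun n => (hdF _ (hABc n).2).2)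
        (subset_closure hf))
    rintro g ⟨_, ⟨n, rfl⟩, hg⟩
    exact norm_le_norm_comp_subtypeL_of_approx g (v g)
      (fun k => hAW (n + 1) ((hAB n).1 (Set.mem_biUnion hg ⟨k, rfl⟩))) (hv1 g) (hv g)

end Dual

section Reflexive

variable {E : Type*} [NormedAddCommGroup E] [NormedSpace ℝ E]
  {W : Submodule ℝ E} {F : Submodule ℝ (StrongDual ℝ E)}

theorem exists_mem_norm_le_forall_apply_eq
    (hrefl : Function.Surjective (NormedSpace.inclusionInDoubleDual ℝ E))
    (hW : IsClosed (W : Set E)) (hnorm : ∀ f ∈ F, ‖f‖ ≤ ‖f.comp W.subtypeL‖) (x : E) :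
    ∃ z ∈ W, ‖z‖ ≤ ‖x‖ ∧ ∀ f ∈ F, f z = f x := by
  let ρ : StrongDual ℝ E →L[ℝ] W →L[ℝ] ℝ :=
    (ContinuousLinearMap.compL ℝ W E ℝ).flip W.subtypeL
  have hρ : ∀ f, ‖ρ f‖ ≤ ‖f‖ := fun f => norm_comp_subtypeL_le f W
  have hρF : Function.Injective (ρ.toLinearMap ∘ₗ F.subtype) := by
    refine (injective_iff_map_eq_zero _).2 fun f hf => ?_
    have hf0 := hnorm f f.2
    rw [show (f : StrongDual ℝ E).comp W.subtypeL = ρ f from rfl,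
      show ρ f = 0 from hf] at hf0
    exact Subtype.ext (norm_le_zero_iff.1 (hf0.trans_eq (norm_zero (E := W →L[ℝ] ℝ))))
  let e := LinearEquiv.ofInjective _ hρF
  -- `ψ (f|_W) = f x`, well defined on the restrictions of `F` because `W` norms `F`
  let ψ : LinearMap.range (ρ.toLinearMap ∘ₗ F.subtype) →ₗ[ℝ] ℝ :=
    (ContinuousLinearMap.apply ℝ ℝ x).toLinearMap ∘ₗ F.subtype ∘ₗ e.symm.toLinearMap
  have hψ : ∀ g, ‖ψ g‖ ≤ ‖x‖ * ‖g‖ := by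
    intro g
    obtain ⟨f, rfl⟩ := e.surjective g
    calc ‖ψ (e f)‖ = ‖(f : StrongDual ℝ E) x‖ := by simp [ψ]
      _ ≤ ‖(f : StrongDual ℝ E)‖ * ‖x‖ := ContinuousLinearMap.le_opNorm _ _
      _ ≤ ‖ρ f‖ * ‖x‖ := by gcongr; exact hnorm f f.2
      _ = ‖x‖ * ‖e f‖ := mul_comm _ _
  obtain ⟨Ψ, hΨ, hΨn⟩ := exists_extension_norm_eq (𝕜 := ℝ) (E := W →L[ℝ] ℝ) _
    (LinearMap.mkContinuous (E := LinearMap.range (ρ.toLinearMap ∘ₗ F.subtype)) ψ ‖x‖ hψ)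
  obtain ⟨z, hz⟩ := hrefl (Ψ ∘L ρ)
  have hzΨ : ∀ g : StrongDual ℝ E, g z = Ψ (ρ g) := fun g => DFunLike.congr_fun hz g
  refine ⟨z, ?_, ?_, fun f hf => ?_⟩
  · by_contra hzW
    obtain ⟨g, hgW, hgz⟩ := W.exists_dual_eq_zero_ne_zero_of_notMem hW hzW
    have hρg : ρ g = 0 := ContinuousLinearMap.ext fun w => hgW w w.2
    exact hgz (by rw [hzΨ, hρg, map_zero])
  · refine NormedSpace.norm_le_dual_bound ℝ z (norm_nonneg x) fun g => ?_
    have hΨx : ‖Ψ‖ ≤ ‖x‖ := hΨn ▸ LinearMap.mkContinuous_norm_le _ (norm_nonneg x) hψ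
    calc ‖g z‖ = ‖Ψ (ρ g)‖ := by rw [hzΨ]
      _ ≤ ‖Ψ‖ * ‖ρ g‖ := Ψ.le_opNorm _
      _ ≤ ‖x‖ * ‖g‖ := by gcongr; exact hρ g
  · rw [hzΨ, show ρ f = e ⟨f, hf⟩ from rfl, hΨ]
    simp [ψ, e]

theorem exists_projection_of_norming_pair
    (hrefl : Function.Surjective (NormedSpace.inclusionInDoubleDual ℝ E))
    (hW : IsClosed (W : Set E)) (hsep : ∀ w ∈ W, (∀ f ∈ F, f w = 0) → w = 0)
    (hnorm : ∀ f ∈ F, ‖f‖ ≤ ‖f.comp W.subtypeL‖) :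
    ∃ P : E →L[ℝ] E, (∀ x, P x ∈ W) ∧ (∀ w ∈ W, P w = w) ∧ ‖P‖ ≤ 1 := by
  choose p hpW hpx hpF using exists_mem_norm_le_forall_apply_eq hrefl hW hnorm
  have hp_eq : ∀ x, ∀ w ∈ W, (∀ f ∈ F, f w = f x) → p x = w := fun x w hw hwF =>
    sub_eq_zero.1 <| hsep _ (W.sub_mem (hpW x) hw) fun f hf => by
      rw [map_sub, hpF x f hf, hwF f hf, sub_self]
  let P : E →ₗ[ℝ] E :=
    { toFun := p
      map_add' := fun x y => hp_eq _ _ (W.add_mem (hpW x) (hpW y)) fun f hf => by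
        simp only [map_add, hpF _ f hf]
      map_smul' := fun c x => hp_eq _ _ (W.smul_mem c (hpW x)) fun f hf => by
        simp only [map_smul, hpF _ f hf, RingHom.id_apply] }
  refine ⟨P.mkContinuous 1 fun x => (one_mul ‖x‖).symm ▸ hpx x, hpW,
    fun w hw => hp_eq w w hw fun _ _ => rfl, LinearMap.mkContinuous_norm_le _ zero_le_one _⟩

end Reflexive

theorem stmt_14_general {X : Type*} [NormedAddCommGroup X] [NormedSpace ℝ X]
    (hX : ¬ TopologicalSpace.SeparableSpace X)
    (hrefl : Function.Surjective (NormedSpace.inclusionInDoubleDual ℝ X))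
    (Y : Submodule ℝ X)
    (hYs : TopologicalSpace.IsSeparable (Y : Set X)) :
    ∃ W : Submodule ℝ X, IsClosed (W : Set X) ∧ TopologicalSpace.IsSeparable (W : Set X) ∧
      Y ≤ W ∧ ∃ P : X →L[ℝ] X, P ∘L P = P ∧ Set.range P = (W : Set X) ∧ ‖P‖ = 1 := by
  have : Nontrivial X := not_subsingleton_iff_nontrivial.1 fun _ => hX inferInstance
  obtain ⟨x₀, hx₀⟩ := exists_ne (0 : X)
  obtain ⟨c, hc, hcY⟩ := hYs
  obtain ⟨W, F, hWc, hWs, hcW, hsep, hnorm⟩ := exists_separable_norming_pair (hc.insert x₀)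
  obtain ⟨P, hPW, hPfix, hP1⟩ := exists_projection_of_norming_pair hrefl hWc hsep hnorm
  refine ⟨W, hWc, hWs, fun y hy => ?_, P, ContinuousLinearMap.ext fun x => hPfix _ (hPW x),
    (Set.range_subset_iff.2 hPW).antisymm fun w hw => ⟨w, hPfix w hw⟩, hP1.antisymm ?_⟩
  · exact hWc.closure_subset_iff.2 ((Set.subset_insert x₀ c).trans hcW) (hcY hy)
  · have := P.le_opNorm x₀
    rw [hPfix x₀ (hcW (Set.mem_insert x₀ c))] at this
    exact (le_mul_iff_one_le_left (norm_pos_iff.2 hx₀)).1 this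

theorem stmt_14 {X : Type*} [NormedAddCommGroup X] [NormedSpace ℝ X] [CompleteSpace X]
    (hX : ¬ TopologicalSpace.SeparableSpace X)
    (hrefl : Function.Surjective (NormedSpace.inclusionInDoubleDual ℝ X))
    (Y : Submodule ℝ X) (hYc : IsClosed (Y : Set X))
    (hYs : TopologicalSpace.IsSeparable (Y : Set X)) :
    ∃ W : Submodule ℝ X, IsClosed (W : Set X) ∧ TopologicalSpace.IsSeparable (W : Set X) ∧
      Y ≤ W ∧ ∃ P : X →L[ℝ] X, P ∘L P = P ∧ Set.range P = (W : Set X) ∧ ‖P‖ = 1 :=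
  stmt_14_general hX hrefl Y hYs
end

section
/- Let X be a Banach space, T a bounded linear operator on X, and M₁, M₂ closed T-invariant subspaces with X = M₁ ⊕ M₂ (every x ∈ X has a unique decomposition x = x₁ + x₂ with x₁ ∈ M₁, x₂ ∈ M₂). If x = x₁ + x₂ with x₁ ∈ M₁ and x₂ ∈ M₂, then J_T(x) ⊆ J_{T|M₁}(x₁) + J_{T|M₂}(x₂), where the J-sets of the restrictions T|M₁ and T|M₂ are computed in M₁ and M₂ respectively. -/
open Filter Topology Pointwise

/-! The projections onto `M₁` along `M₂` and onto `M₂` along `M₁` are continuous (closed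
complements in a Banach space) and intertwine `T` with `T₁` and `T₂` (both subspaces are
invariant). A continuous map intertwining two operators carries J-sets into J-sets, and every
`y` is the sum of its two projections. -/

theorem JSet.mapsTo_of_semiconj {𝕜 X Y : Type*} [NontriviallyNormedField 𝕜]
    [NormedAddCommGroup X] [NormedSpace 𝕜 X] [NormedAddCommGroup Y] [NormedSpace 𝕜 Y]
    {T : X →L[𝕜] X} {U : Y →L[𝕜] Y} {P : X → Y} (hP : Continuous P)
    (h : Function.Semiconj P T U) (x : X) : Set.MapsTo P (JSet T x) (JSet U (P x)) := by
  rintro y ⟨k, hk, u, hu, hTu⟩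
  refine ⟨k, hk, P ∘ u, (hP.tendsto x).comp hu, ?_⟩
  simpa only [FunLike.coe_pow_eq_iterate, Function.comp_def, (h.iterate_right _).eq]
    using (hP.tendsto y).comp hTu

theorem Submodule.projectionOnto_semiconj {R M F : Type*} [Ring R] [AddCommGroup M] [Module R M]
    [FunLike F M M] [AddHomClass F M M] {p q : Submodule R M} (h : IsCompl p q) {f : F}
    (hq : ∀ m ∈ q, f m ∈ q) {g : p → p} (hg : ∀ m : p, (g m : M) = f m) :
    Function.Semiconj (p.projectionOnto q h) f g := by
  intro z
  conv_lhs => rw [← projection_add_projection_eq_self h z, map_add, map_add]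
  rw [projection_apply, ← hg, projectionOnto_apply_left,
    (projectionOnto_apply_eq_zero_iff h).mpr (hq _ (projection_apply_mem _ z)), add_zero]

theorem JSet.mapsTo_projectionOntoL {𝕜 X : Type*} [NontriviallyNormedField 𝕜]
    [NormedAddCommGroup X] [NormedSpace 𝕜 X] {p q : Submodule 𝕜 X} (h : p.IsTopCompl q)
    {T : X →L[𝕜] X} (hq : ∀ m ∈ q, T m ∈ q) {Tp : p →L[𝕜] p} (hTp : ∀ m : p, (Tp m : X) = T m)
    (x : X) :
    Set.MapsTo (p.projectionOntoL q h) (JSet T x) (JSet Tp (p.projectionOntoL q h x)) :=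
  JSet.mapsTo_of_semiconj (p.projectionOntoL q h).continuous
    (Submodule.projectionOnto_semiconj h.isCompl hq hTp) x

theorem stmt_16 {X : Type*} [NormedAddCommGroup X] [NormedSpace ℂ X] [CompleteSpace X]
    (T : X →L[ℂ] X) (M₁ M₂ : Submodule ℂ X)
    (hM₁c : IsClosed (M₁ : Set X)) (hM₂c : IsClosed (M₂ : Set X))
    (hinv₁ : ∀ m ∈ M₁, T m ∈ M₁) (hinv₂ : ∀ m ∈ M₂, T m ∈ M₂)
    (hcompl : IsCompl M₁ M₂)
    (T₁ : M₁ →L[ℂ] M₁) (hT₁ : ∀ m : M₁, (T₁ m : X) = T m)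
    (T₂ : M₂ →L[ℂ] M₂) (hT₂ : ∀ m : M₂, (T₂ m : X) = T m)
    (x : X) (x₁ : M₁) (x₂ : M₂) (hx : x = (x₁ : X) + (x₂ : X)) :
    JSet T x ⊆ (Subtype.val '' JSet T₁ x₁) + (Subtype.val '' JSet T₂ x₂) := by
  have h : M₁.IsTopCompl M₂ := Submodule.IsCompl.isTopCompl_of_isClosed hcompl hM₁c hM₂c
  intro y hy
  refine ⟨_, ⟨_, ?_, rfl⟩, _, ⟨_, ?_, rfl⟩, Submodule.projectionL_add_projectionL_eq_self h y⟩
  · simpa [hx] using JSet.mapsTo_projectionOntoL h hinv₂ hT₁ x hy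
  · simpa [hx] using JSet.mapsTo_projectionOntoL h.symm hinv₁ hT₂ x hy
end

section
/- Let X be a finite-dimensional complex normed space and T a bounded linear operator on X. Then for every non-zero vector x ∈ X, the J-set J_T(x) has empty interior. -/
open Filter Topology

/-!
If `T` has an eigenvalue `μ` with `‖μ‖ ≤ 1`, take a left eigenvector `φ`, i.e. `φ ∘ T = μ • φ`.
For `y = lim T^(kₙ) uₙ` in `J_T(x)` this gives `φ y = lim μ^(kₙ) φ uₙ`, so `‖φ y‖` equals `0` or
`‖φ x‖` independently of `y`: the J-set lies in a level set of `‖φ‖`, which has empty interior.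
Otherwise every eigenvalue has modulus `> 1`, so `T` is invertible and `T⁻¹` has spectral radius
`< 1`; by Gelfand's formula `‖T^(-k)‖ → 0`, hence `uₙ = T^(-kₙ) T^(kₙ) uₙ → 0`, contradicting
`uₙ → x ≠ 0`: the J-set is empty.
-/

open Metric ENNReal

theorem Module.End.exists_dual_comp_eq_smul_of_mem_spectrum {K V : Type*} [Field K]
    [AddCommGroup V] [Module K V] [FiniteDimensional K V] {f : Module.End K V} {μ : K}
    (hμ : μ ∈ spectrum K f) : ∃ φ : Module.Dual K V, φ ≠ 0 ∧ φ ∘ₗ f = μ • φ := by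
  set g : Module.End K V := algebraMap K _ μ - f
  have hg : LinearMap.range g < ⊤ := by
    rw [lt_top_iff_ne_top, ne_eq, ← LinearMap.isUnit_iff_range_eq_top]
    exact hμ
  obtain ⟨φ, hφ0, hφg⟩ := Submodule.exists_dual_map_eq_bot_of_lt_top hg inferInstance
  refine ⟨φ, hφ0, LinearMap.ext fun v => ?_⟩
  have hv : φ (g v) = 0 := by
    simpa [hφg] using Submodule.mem_map_of_mem (f := φ) (LinearMap.mem_range_self g v)
  simp only [g, LinearMap.sub_apply, Module.algebraMap_end_apply, map_sub, map_smul,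
    sub_eq_zero] at hv
  simp only [LinearMap.comp_apply, LinearMap.smul_apply, ← hv, smul_eq_mul]

theorem ContinuousLinearMap.exists_dual_comp_eq_smul_of_mem_spectrum {𝕜 X : Type*}
    [NontriviallyNormedField 𝕜] [CompleteSpace 𝕜] [NormedAddCommGroup X] [NormedSpace 𝕜 X]
    [FiniteDimensional 𝕜 X] {T : X →L[𝕜] X} {μ : 𝕜} (hμ : μ ∈ spectrum 𝕜 T) :
    ∃ φ : StrongDual 𝕜 X, φ ≠ 0 ∧ φ ∘L T = μ • φ := by
  have : CompleteSpace X := FiniteDimensional.complete 𝕜 X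
  rw [ContinuousLinearMap.spectrum_eq] at hμ
  obtain ⟨φ, hφ0, hφT⟩ := Module.End.exists_dual_comp_eq_smul_of_mem_spectrum hμ
  refine ⟨LinearMap.toContinuousLinearMap φ, fun h => hφ0 ?_, ?_⟩
  · exact LinearMap.ext fun v => by simpa using congr($h v)
  · exact ContinuousLinearMap.ext fun v => by simpa using congr($hφT v)

theorem interior_eq_empty_of_forall_norm_apply_eq {𝕜 X : Type*} [RCLike 𝕜]
    [NormedAddCommGroup X] [NormedSpace 𝕜 X] {φ : StrongDual 𝕜 X} (hφ : φ ≠ 0) {S : Set X}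
    {t : ℝ} (hS : ∀ y ∈ S, ‖φ y‖ = t) : interior S = ∅ := by
  have hSφ : S ⊆ φ ⁻¹' sphere 0 t := fun y hy => by simpa using hS y hy
  refine Set.subset_empty_iff.1 ((interior_mono hSφ).trans ?_)
  rw [← (φ.isOpenMap_of_ne_zero hφ).preimage_interior_eq_interior_preimage φ.continuous,
    interior_sphere', Set.preimage_empty]

theorem spectralRadius_inv_lt_one {A : Type*} [NormedRing A] [NormedAlgebra ℂ A]
    [CompleteSpace A] [Nontrivial A] {u : Aˣ} (hu : ∀ z ∈ spectrum ℂ (u : A), 1 < ‖z‖) :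
    spectralRadius ℂ (↑u⁻¹ : A) < 1 := by
  rw [← ENNReal.coe_one]
  refine spectrum.spectralRadius_lt_of_forall_lt _ fun z hz => ?_
  rw [← spectrum.map_inv, Set.mem_inv] at hz
  have hz1 := hu _ hz
  rw [norm_inv] at hz1
  have hz0 : z ≠ 0 := by rintro rfl; norm_num at hz1
  rw [← NNReal.coe_lt_coe, coe_nnnorm, NNReal.coe_one]
  exact (one_lt_inv₀ (norm_pos_iff.2 hz0)).1 hz1

theorem tendsto_norm_pow_of_spectralRadius_lt_one {A : Type*} [NormedRing A]
    [NormedAlgebra ℂ A] [CompleteSpace A] {a : A} (ha : spectralRadius ℂ a < 1) :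
    Tendsto (fun n => ‖a ^ n‖) atTop (𝓝 0) := by
  obtain ⟨r, hρr, hr1⟩ := ENNReal.lt_iff_exists_nnreal_btwn.1 ha
  have hr1 : (r : ℝ) < 1 := by exact_mod_cast hr1
  have hbound : ∀ᶠ n : ℕ in atTop, ‖a ^ n‖ ≤ (r : ℝ) ^ n := by
    have hgelfand := spectrum.pow_nnnorm_pow_one_div_tendsto_nhds_spectralRadius a
    filter_upwards [hgelfand.eventually_lt_const hρr, eventually_ge_atTop 1] with n hn hn1
    have h : ((‖a ^ n‖₊ : ℝ≥0∞) ^ (1 / n : ℝ)) ^ (n : ℝ) ≤ (r : ℝ≥0∞) ^ (n : ℝ) :=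
      ENNReal.rpow_le_rpow hn.le (by positivity)
    rw [← ENNReal.rpow_mul, one_div_mul_cancel (by positivity), ENNReal.rpow_one,
      ENNReal.rpow_natCast] at h
    exact_mod_cast h
  exact squeeze_zero' (Eventually.of_forall fun n => norm_nonneg _) hbound
    (tendsto_pow_atTop_nhds_zero_of_lt_one r.coe_nonneg hr1)

section JSet

variable {𝕜 X : Type*} [NontriviallyNormedField 𝕜] [NormedAddCommGroup X] [NormedSpace 𝕜 X]

theorem exists_forall_norm_apply_eq_of_mem_JSet {T : X →L[𝕜] X} {φ : StrongDual 𝕜 X} {μ : 𝕜}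
    (hφ : φ ∘L T = μ • φ) (hμ : ‖μ‖ ≤ 1) (x : X) : ∃ t : ℝ, ∀ y ∈ JSet T x, ‖φ y‖ = t := by
  have hpow : ∀ k v, φ ((T ^ k) v) = μ ^ k * φ v := by
    intro k
    induction k with
    | zero => simp
    | succ k ih =>
      intro v
      rw [pow_succ, mul_apply_eq_comp, ih, ← ContinuousLinearMap.comp_apply, hφ]
      simp [pow_succ, mul_assoc]
  obtain ⟨c, hc⟩ : ∃ c : ℝ, Tendsto (fun n : ℕ => ‖μ‖ ^ n) atTop (𝓝 c) := by
    rcases hμ.lt_or_eq with h | h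
    · exact ⟨0, tendsto_pow_atTop_nhds_zero_of_lt_one (norm_nonneg _) h⟩
    · exact ⟨1, by simp [h]⟩
  refine ⟨c * ‖φ x‖, fun y ⟨k, hk, u, hu, hy⟩ => tendsto_nhds_unique ?_
    ((hc.comp hk.tendsto_atTop).mul ((φ.continuous.tendsto x).comp hu).norm)⟩
  refine ((φ.continuous.tendsto y).comp hy).norm.congr fun n => ?_
  simp only [Function.comp_apply, hpow, norm_mul, norm_pow]

theorem JSet_eq_empty_of_mul_eq_one_of_tendsto {S T : X →L[𝕜] X} (hST : S * T = 1)
    (hS : Tendsto (fun n => ‖S ^ n‖) atTop (𝓝 0)) {x : X} (hx : x ≠ 0) : JSet T x = ∅ := by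
  refine Set.eq_empty_of_forall_notMem fun y ⟨k, hk, u, hu, hy⟩ => hx ?_
  have hpow : ∀ n : ℕ, S ^ n * T ^ n = 1 := by
    intro n
    induction n with
    | zero => simp
    | succ n ih => rw [pow_succ, pow_succ', mul_assoc, ← mul_assoc S, hST, one_mul, ih]
  have hu0 : Tendsto (fun n => ‖u n‖) atTop (𝓝 0) := by
    refine squeeze_zero (fun n => norm_nonneg _) (fun n => ?_)
      (by simpa only [zero_mul] using (hS.comp hk.tendsto_atTop).mul hy.norm)
    calc ‖u n‖ = ‖(S ^ k n) ((T ^ k n) (u n))‖ := by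
          rw [← mul_apply_eq_comp, hpow, one_apply_eq_self]
      _ ≤ ‖S ^ k n‖ * ‖(T ^ k n) (u n)‖ := (S ^ k n).le_opNorm _
  exact tendsto_nhds_unique hu (tendsto_zero_iff_norm_tendsto_zero.2 hu0)

end JSet

theorem stmt_17 {X : Type*} [NormedAddCommGroup X] [NormedSpace ℂ X]
    [FiniteDimensional ℂ X] (T : X →L[ℂ] X) :
    ∀ x : X, x ≠ 0 → interior (JSet T x) = ∅ := by
  intro x hx
  by_cases h : ∃ μ ∈ spectrum ℂ T, ‖μ‖ ≤ 1
  · obtain ⟨μ, hμT, hμ⟩ := h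
    obtain ⟨φ, hφ0, hφT⟩ := ContinuousLinearMap.exists_dual_comp_eq_smul_of_mem_spectrum hμT
    obtain ⟨t, ht⟩ := exists_forall_norm_apply_eq_of_mem_JSet hφT hμ x
    exact interior_eq_empty_of_forall_norm_apply_eq hφ0 ht
  · push Not at h
    have : Nontrivial X := ⟨⟨x, 0, hx⟩⟩
    have : CompleteSpace X := FiniteDimensional.complete ℂ X
    obtain ⟨U, rfl⟩ : IsUnit T := by
      by_contra hT
      have := h 0 ((spectrum.zero_mem_iff ℂ).2 hT)
      norm_num at this
    rw [JSet_eq_empty_of_mul_eq_one_of_tendsto U.inv_mul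
      (tendsto_norm_pow_of_spectralRadius_lt_one (spectralRadius_inv_lt_one h)) hx,
      interior_empty]
end

section
/- Let X be a complex Banach space and T a bounded linear operator on X whose spectrum satisfies σ(T) ⊂ {μ ∈ ℂ : |μ| > 1}. Then T is zero J-class, i.e. J_T(0) = X and J_T(x) ≠ X for every x ≠ 0. -/
/-!
Since `0 ∉ σ(T)`, `T` is invertible, and `σ(T⁻¹) = σ(T)⁻¹` lies in the open unit disc, so by
Gelfand's formula `‖T⁻ⁿ‖ → 0`. Then `xₙ = T⁻ⁿ y → 0` with `Tⁿ xₙ = y`, so `J_T(0) = X`.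
Conversely, if `xₙ → x` and `T^{kₙ} xₙ → 0`, then `‖xₙ‖ ≤ ‖T^{-kₙ}‖ ‖T^{kₙ} xₙ‖ → 0`, so
`x = 0`; hence `0 ∉ J_T(x)` for `x ≠ 0`.
-/

open Filter Topology

open NNReal

theorem tendsto_norm_pow_atTop_nhds_zero_of_spectralRadius_lt_one {A : Type*} [NormedRing A]
    [NormedAlgebra ℂ A] [CompleteSpace A] {a : A} (ha : spectralRadius ℂ a < 1) :
    Tendsto (fun n : ℕ => ‖a ^ n‖) atTop (𝓝 0) := by
  obtain ⟨r, hr, hr1⟩ := exists_between ha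
  lift r to ℝ≥0 using hr1.ne_top
  have hbound : ∀ᶠ n : ℕ in atTop, ‖a ^ n‖₊ ≤ r ^ n := by
    have hroot :=
      (spectrum.pow_nnnorm_pow_one_div_tendsto_nhds_spectralRadius a).eventually_lt_const hr
    filter_upwards [hroot, eventually_ne_atTop 0] with n hn hn0
    have := (ENNReal.rpow_lt_rpow hn (Nat.cast_pos.2 (Nat.pos_of_ne_zero hn0))).le
    rw [← ENNReal.rpow_mul, one_div_mul_cancel (by exact_mod_cast hn0), ENNReal.rpow_one,
      ENNReal.rpow_natCast] at this
    exact_mod_cast this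
  refine squeeze_zero' (.of_forall fun _ => norm_nonneg _) (hbound.mono fun n hn => ?_)
    (tendsto_pow_atTop_nhds_zero_of_lt_one r.2 (by exact_mod_cast hr1))
  exact_mod_cast hn

theorem spectralRadius_inv_lt_one_s18 {𝕜 A : Type*} [NormedField 𝕜] [ProperSpace 𝕜] [NormedRing A]
    [NormedAlgebra 𝕜 A] [CompleteSpace A] (a : Aˣ) (h : spectrum 𝕜 (a : A) ⊆ {μ | 1 < ‖μ‖}) :
    spectralRadius 𝕜 (↑a⁻¹ : A) < 1 := by
  rcases (spectrum 𝕜 (↑a⁻¹ : A)).eq_empty_or_nonempty with he | hne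
  · simp [spectralRadius, he]
  have hlt : ∀ z ∈ spectrum 𝕜 (↑a⁻¹ : A), ‖z‖₊ < 1 := by
    intro z hz
    rw [← spectrum.map_inv, Set.mem_inv] at hz
    have hz' : 1 < ‖z‖⁻¹ := norm_inv z ▸ h hz
    exact_mod_cast (one_lt_inv_iff₀.1 hz').2
  simpa using spectrum.spectralRadius_lt_of_forall_lt_of_nonempty hne (r := 1) hlt

section JSet

variable {𝕜 X : Type*} [NontriviallyNormedField 𝕜] [NormedAddCommGroup X] [NormedSpace 𝕜 X]

theorem JSet_zero_eq_univ_of_tendsto_norm_inv_pow (T : (X →L[𝕜] X)ˣ)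
    (h : Tendsto (fun n : ℕ => ‖(↑T⁻¹ : X →L[𝕜] X) ^ n‖) atTop (𝓝 0)) :
    JSet (T : X →L[𝕜] X) 0 = Set.univ := by
  refine Set.eq_univ_of_forall fun y =>
    ⟨id, strictMono_id, fun n => ((↑T⁻¹ : X →L[𝕜] X) ^ n) y, ?_, ?_⟩
  · refine squeeze_zero_norm (fun n => ((↑T⁻¹ : X →L[𝕜] X) ^ n).le_opNorm y) ?_
    simpa using h.mul_const ‖y‖
  · have hpow_inv_pow (n : ℕ) : ((T : X →L[𝕜] X) ^ n) (((↑T⁻¹ : X →L[𝕜] X) ^ n) y) = y := by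
      simpa using DFunLike.congr_fun (T ^ n).mul_inv y
    simp only [id, hpow_inv_pow]
    exact tendsto_const_nhds

theorem eq_zero_of_zero_mem_JSet (T : (X →L[𝕜] X)ˣ)
    (h : BddAbove (Set.range fun n : ℕ => ‖(↑T⁻¹ : X →L[𝕜] X) ^ n‖)) {x : X}
    (hx : 0 ∈ JSet (T : X →L[𝕜] X) x) : x = 0 := by
  obtain ⟨k, -, u, hu, hTu⟩ := hx
  obtain ⟨C, hC⟩ := h
  have hbound : ∀ n, ‖u n‖ ≤ C * ‖((T : X →L[𝕜] X) ^ k n) (u n)‖ := fun n => calc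
    ‖u n‖ = ‖((↑T⁻¹ : X →L[𝕜] X) ^ k n) (((T : X →L[𝕜] X) ^ k n) (u n))‖ := by
        simpa using congrArg norm (DFunLike.congr_fun (T ^ k n).inv_mul (u n)).symm
    _ ≤ ‖(↑T⁻¹ : X →L[𝕜] X) ^ k n‖ * ‖((T : X →L[𝕜] X) ^ k n) (u n)‖ :=
        ContinuousLinearMap.le_opNorm _ _
    _ ≤ C * ‖((T : X →L[𝕜] X) ^ k n) (u n)‖ := by gcongr; exact hC ⟨k n, rfl⟩
  have hu0 : Tendsto u atTop (𝓝 0) :=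
    squeeze_zero_norm hbound (by simpa using hTu.norm.const_mul C)
  exact tendsto_nhds_unique hu hu0

end JSet

theorem stmt_18 {X : Type*} [NormedAddCommGroup X] [NormedSpace ℂ X] [CompleteSpace X]
    (T : X →L[ℂ] X) (hspec : spectrum ℂ T ⊆ {μ : ℂ | 1 < ‖μ‖}) :
    JSet T 0 = Set.univ ∧ ∀ x : X, x ≠ 0 → JSet T x ≠ Set.univ := by
  obtain ⟨T, rfl⟩ : IsUnit T :=
    spectrum.isUnit_of_zero_notMem ℂ fun h0 => absurd (hspec h0) (by norm_num)
  have hdecay := tendsto_norm_pow_atTop_nhds_zero_of_spectralRadius_lt_one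
    (spectralRadius_inv_lt_one_s18 T hspec)
  exact ⟨JSet_zero_eq_univ_of_tendsto_norm_inv_pow T hdecay, fun x hx hJ =>
    hx (eq_zero_of_zero_mem_JSet T hdecay.bddAbove_range (hJ ▸ Set.mem_univ 0))⟩
end
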